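/- Let m ≥ 1, let s_1, …, s_m be nonzero integers, let w_1, …, w_m ∈ ℚ, and let y_1, …, y_m ∈ ℕ_0 be such that Σ_{j=1}^{l} s_j y_j ≥ 0 for all l ∈ [1,m−1], Σ_{j=1}^{m} s_j y_j = 0, and Σ_{j=1}^{m} w_j y_j > 0. Then there exist indices i < j with s_i > 0, s_j < 0, and −s_j·w_i + s_i·w_j > 0. -/

import Mathlib

namespace Periodic

/-- An arc of a static graph: a source node, a target node, and a shift. -/
structure Arc (n : ℕ) where
  src : Fin n
  tgt : Fin n
  shift : ℤ
deriving DecidableEq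

/-- A static graph on `n` nodes, given by three matrices with entries in `ℚ ∪ {-∞}`. -/
structure StaticGraph (n : ℕ) where
  Mneg : Matrix (Fin n) (Fin n) (WithBot ℚ)
  Mzero : Matrix (Fin n) (Fin n) (WithBot ℚ)
  Mpos : Matrix (Fin n) (Fin n) (WithBot ℚ)

/-- The matrix associated to shift `s` (the all `-∞` matrix if `s ∉ {-1,0,1}`). -/
def StaticGraph.M {n : ℕ} (G : StaticGraph n) (s : ℤ) : Matrix (Fin n) (Fin n) (WithBot ℚ) :=
  if s = -1 then G.Mneg else if s = 0 then G.Mzero else if s = 1 then G.Mpos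
  else Matrix.of fun _ _ => ⊥

/-- `e` is an arc of `G` iff the corresponding matrix entry is not `-∞`. -/
def StaticGraph.IsArc {n : ℕ} (G : StaticGraph n) (e : Arc n) : Prop :=
  G.M e.shift e.tgt e.src ≠ ⊥

/-- The (rational) weight of an arc. -/
def StaticGraph.w {n : ℕ} (G : StaticGraph n) (e : Arc n) : ℚ :=
  WithBot.unbotD 0 (G.M e.shift e.tgt e.src)

/-- A path in the static graph `G`: a first node together with a compatible list of arcs. -/
structure SPath {n : ℕ} (G : StaticGraph n) where
  first : Fin n
  arcs : List (Arc n)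
  valid : ∀ e ∈ arcs, G.IsArc e
  startOk : ∀ e ∈ arcs.head?, e.src = first
  chainOk : arcs.Chain' (fun e f => e.tgt = f.src)

namespace SPath

variable {n : ℕ} {G : StaticGraph n}

/-- The last node of a path. -/
def last (p : SPath G) : Fin n := (p.arcs.getLast?).elim p.first Arc.tgt

/-- The length of a path. -/
def len (p : SPath G) : ℕ := p.arcs.length

/-- The shift of a path. -/
def shift (p : SPath G) : ℤ := (p.arcs.map Arc.shift).sum

/-- The weight of a path. -/
def weight (p : SPath G) : ℚ := (p.arcs.map G.w).sum

/-- The sum of the shifts of the first `i` arcs of a path. -/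
def prefixShift (p : SPath G) (i : ℕ) : ℤ := ((p.arcs.take i).map Arc.shift).sum

/-- The left-shift of a path: the minimum of all prefix sums of arc shifts. -/
def lshift (p : SPath G) : ℤ :=
  Finset.univ.inf' Finset.univ_nonempty
    (fun i : Fin (p.arcs.length + 1) => p.prefixShift i)

/-- A path is a circuit if its first and last nodes coincide. -/
def IsCircuit (p : SPath G) : Prop := p.first = p.last

/-- The sequence of nodes visited by a path. -/
def nodes (p : SPath G) : List (Fin n) := p.first :: p.arcs.map Arc.tgt

/-- An elementary circuit: a nonempty circuit whose nodes, except the last one,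
are pairwise distinct. -/
def IsElemCircuit (p : SPath G) : Prop :=
  p.IsCircuit ∧ p.arcs ≠ [] ∧ p.nodes.dropLast.Nodup

/-- Concatenation of two paths with matching endpoints. -/
def append (p q : SPath G) (h : q.first = p.last) : SPath G where
  first := p.first
  arcs := p.arcs ++ q.arcs
  valid := by
    intro e he
    rcases List.mem_append.mp he with h' | h'
    · exact p.valid e h'
    · exact q.valid e h'
  startOk := by
    intro e he
    cases hp : p.arcs with
    | nil =>
      rw [hp] at he
      simp only [List.nil_append] at he
      rw [q.startOk e he, h]
      simp [SPath.last, hp]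
    | cons a l =>
      rw [hp] at he
      simp only [List.cons_append, List.head?_cons, Option.mem_def, Option.some.injEq] at he
      subst he
      exact p.startOk a (by rw [hp]; rfl)
  chainOk := by
    apply List.IsChain.append p.chainOk q.chainOk
    intro x hx y hy
    have h1 : y.src = q.first := q.startOk y hy
    have hx' : p.arcs.getLast? = some x := hx
    have h2 : p.last = x.tgt := by simp [SPath.last, hx']
    show x.tgt = y.src
    rw [h1, h, h2]

theorem last_append (p q : SPath G) (h : q.first = p.last) :
    (p.append q h).last = q.last := by
  cases hq : q.arcs with
  | nil =>
    have hql : q.last = q.first := by simp [SPath.last, hq]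
    simp [SPath.append, SPath.last, hq, hql, h]
  | cons a l =>
    have hx : (a :: l).getLast? = some ((a :: l).getLast (by simp)) :=
      List.getLast?_eq_some_getLast (by simp)
    simp [SPath.append, SPath.last, hq, List.getLast?_append, hx]

/-- The empty path at node `i`. -/
def nil (G : StaticGraph n) (i : Fin n) : SPath G :=
  ⟨i, [], by simp, by simp, List.isChain_nil⟩

/-- Auxiliary construction for powers of a circuit. -/
def npowAux (q : SPath G) (h : q.IsCircuit) :
    (x : ℕ) → {r : SPath G // r.first = q.first ∧ r.last = q.first}
  | 0 => ⟨SPath.nil G q.first, rfl, by simp [SPath.last, SPath.nil]⟩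
  | x + 1 =>
    let r := npowAux q h x
    ⟨q.append r.1 (r.2.1.trans h), rfl, (last_append q r.1 _).trans r.2.2⟩

/-- The `x`-fold concatenation `q^x` of a circuit `q` with itself. -/
def npow (q : SPath G) (h : q.IsCircuit) (x : ℕ) : SPath G := (npowAux q h x).1

theorem npow_first (q : SPath G) (h : q.IsCircuit) (x : ℕ) :
    (npow q h x).first = q.first := (npowAux q h x).2.1

theorem npow_last (q : SPath G) (h : q.IsCircuit) (x : ℕ) :
    (npow q h x).last = q.first := (npowAux q h x).2.2

/-- Concatenation of a nonempty list of paths with matching endpoints. -/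
def concatChain (p : SPath G) :
    (l : List (SPath G)) → (p :: l).Chain' (fun a b => b.first = a.last) →
      {r : SPath G // r.first = p.first}
  | [], _ => ⟨p, rfl⟩
  | q :: l, h =>
    let rest := concatChain q l (List.isChain_cons_cons.mp h).2
    ⟨p.append rest.1 (rest.2.trans (List.isChain_cons_cons.mp h).1), rfl⟩

/-- The path `p`, started at shift `k`, visits only shifts belonging to `S`;
i.e., `(p, k)` represents a path of the `S`-periodic graph `G_S`. -/
def shiftsIn (p : SPath G) (k : ℤ) (S : Set ℤ) : Prop :=
  ∀ i ≤ p.arcs.length, k + p.prefixShift i ∈ S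

end SPath

/-- The set of positive integers (the paper's `ℕ`). -/
def Spos : Set ℤ := {k | 0 < k}

/-- The set of integers `k` with `-n ≤ k ≤ n`. -/
def Sint (n : ℕ) : Set ℤ := {k | -(n : ℤ) ≤ k ∧ k ≤ (n : ℤ)}

/-- The `S`-periodic graph `G_S` contains an `∞`-weight path: there are nodes `u, v` of `G_S`
and an infinite sequence of paths of `G_S` from `u` to `v` with strictly increasing weights. -/
def HasInfWeightPath {n : ℕ} (G : StaticGraph n) (S : Set ℤ) : Prop :=
  ∃ u v : Fin n × ℤ, ∃ (p : ℕ → SPath G) (k : ℕ → ℤ),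
    (∀ h, (p h).shiftsIn (k h) S) ∧
    (∀ h, ((p h).first, k h) = u ∧ ((p h).last, k h + (p h).shift) = v) ∧
    ∀ h, (p h).weight < (p (h + 1)).weight

/-- The `S`-periodic graph `G_S` contains a circuit with positive weight. -/
def HasPosWeightCircuit {n : ℕ} (G : StaticGraph n) (S : Set ℤ) : Prop :=
  ∃ (p : SPath G) (k : ℤ), p.shiftsIn k S ∧ p.IsCircuit ∧ p.shift = 0 ∧ 0 < p.weight

end Periodic

namespace Periodic

variable {n : ℕ} {G : StaticGraph n}

/-- The inner nodes of a path: all visited nodes except the first and the last one. -/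
def SPath.innerNodes (p : SPath G) : List (Fin n) := (p.nodes.drop 1).dropLast

/-- `p` splits as the concatenation `u q v`. -/
def Splits (p u q v : SPath G) : Prop :=
  p.first = u.first ∧ p.arcs = u.arcs ++ (q.arcs ++ v.arcs) ∧
    q.first = u.last ∧ v.first = q.last

/-- The elementary circuit `q` can be cut out of `p = u q v`: all of its inner nodes
occur somewhere else in the remaining path `u v`. -/
def Removable (p u q v : SPath G) : Prop :=
  Splits p u q v ∧ q.IsElemCircuit ∧
    ∀ x ∈ q.innerNodes, x ∈ u.nodes ∨ x ∈ v.nodes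

/-- One step of the decomposition: cut the removable elementary circuit `q` out of `p`,
obtaining `p₂`. -/
def CutStep (p p₂ q : SPath G) : Prop :=
  ∃ u v, Removable p u q v ∧ p₂.first = u.first ∧ p₂.arcs = u.arcs ++ v.arcs

/-- `IsCPD p p' Q` : `(p', Q)` is a complete path decomposition of `p`, where the
multiset `Q` records the removed elementary circuits with their multiplicities. -/
inductive IsCPD : SPath G → SPath G → Multiset (SPath G) → Prop
  | done (p : SPath G) (h : ∀ u q v, ¬ Removable p u q v) : IsCPD p p 0
  | step (p p₂ p' q : SPath G) (Q : Multiset (SPath G)) :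
      CutStep p p₂ q → IsCPD p₂ p' Q → IsCPD p p' (q ::ₘ Q)

/-- Assumption A: all circuits of the decomposition have nonzero shift, and no two distinct
circuits have both the same source node and the same shift. -/
def AssumptionA (Q : Multiset (SPath G)) : Prop :=
  (∀ q ∈ Q, q.shift ≠ 0) ∧
    ∀ q ∈ Q, ∀ r ∈ Q, q ≠ r → (q.first, q.shift) ≠ (r.first, r.shift)

/-- `ps` is a factorization of the path `p` into consecutive subpaths. -/
def IsFactorization (p : SPath G) (ps : List (SPath G)) : Prop :=
  ps ≠ [] ∧ ps.Chain' (fun a b => b.first = a.last) ∧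
    (∀ q ∈ ps.head?, q.first = p.first) ∧ p.arcs = (ps.map SPath.arcs).flatten

/-- One move of the canonical-path-composition algorithm: a factor which is a circuit with
negative shift is postponed, or a factor which is a circuit with positive shift is
anticipated. -/
inductive MoveStep : List (SPath G) → List (SPath G) → Prop
  | postpone (a b d : List (SPath G)) (c : SPath G) (hc : c.IsCircuit) (hs : c.shift < 0) :
      MoveStep (a ++ c :: (b ++ d)) (a ++ (b ++ c :: d))
  | anticipate (a b d : List (SPath G)) (c : SPath G) (hc : c.IsCircuit) (hs : 0 < c.shift) :
      MoveStep (a ++ (b ++ c :: d)) (a ++ c :: (b ++ d))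

/-- Weights of pseudo-circuits of `G_S` from node `(i, 0)` to node `(i, s)`. -/
def PCWeights (G : StaticGraph n) (S : Set ℤ) (i : Fin n) (s : ℤ) : Set ℚ :=
  {w | ∃ p : SPath G, p.shiftsIn 0 S ∧ p.first = i ∧ p.last = i ∧ p.shift = s ∧ p.weight = w}

/-- The path `r^{(h)} = q₁^{(-s₂)·h} p' q₂^{s₁·h}`. -/
def rpath (q₁ p' q₂ : SPath G)
    (hc₁ : q₁.IsCircuit) (hc₂ : q₂.IsCircuit)
    (h₁ : p'.first = q₁.last) (h₂ : q₂.first = p'.last) (h : ℕ) : SPath G :=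
  (SPath.npow q₁ hc₁ ((-q₂.shift).toNat * h)).append
    (p'.append (SPath.npow q₂ hc₂ (q₁.shift.toNat * h))
      ((SPath.npow_first q₂ hc₂ _).trans h₂))
    ((h₁.trans hc₁.symm).trans (SPath.npow_last q₁ hc₁ _).symm)

/-- `x` is a nonzero solution in `S` which is minimal (componentwise) and has minimal
carrier among nonzero solutions. -/
def isMinSol {ι : Type*} (S : Set (ι → ℕ)) (x : ι → ℕ) : Prop :=
  x ∈ S ∧ x ≠ 0 ∧
    ∀ y ∈ S, y ≠ x → y ≠ 0 → ¬ y ≤ x ∧ ¬ ({i | y i ≠ 0} ⊂ {i | x i ≠ 0})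

/-- Solutions `(y, z) ∈ ℕ₀^m × ℕ₀^(m-1)` of the Diophantine system
`z_l = ∑_{j ≤ l} s_j y_j` (for `l ∈ [1, m-1]`) and `∑_j s_j y_j = 0`. -/
def DioSol (m : ℕ) (s : Fin m → ℤ) : Set (Fin m ⊕ Fin (m - 1) → ℕ) :=
  {x | (∀ l : Fin (m - 1), (x (Sum.inr l) : ℤ) =
          ∑ j ∈ Finset.univ.filter (fun j : Fin m => (j : ℕ) ≤ (l : ℕ)),
            s j * (x (Sum.inl j) : ℤ)) ∧
       (∑ j : Fin m, s j * (x (Sum.inl j) : ℤ)) = 0}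

/-- The candidate minimal solution `x^{(i,j)}`: `y_i = -s_j/g`, `y_j = s_i/g`,
`z_l = s_i·(-s_j)/g` for `l ∈ [i, j-1]`, all other entries `0`, where `g = gcd(s_i, -s_j)`. -/
def dioMinVec (m : ℕ) (s : Fin m → ℤ) (i j : Fin m) : Fin m ⊕ Fin (m - 1) → ℕ :=
  fun l => match l with
  | Sum.inl a =>
      if a = i then (s j).natAbs / Int.gcd (s i) (s j)
      else if a = j then (s i).natAbs / Int.gcd (s i) (s j)
      else 0
  | Sum.inr a =>
      if (i : ℕ) ≤ (a : ℕ) ∧ (a : ℕ) < (j : ℕ)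
      then (s i).natAbs * ((s j).natAbs / Int.gcd (s i) (s j))
      else 0

end Periodic

open Periodic Periodic.SPath


theorem stmt12_aux (m : ℕ) (c : Fin m → ℚ) :
    ∀ N (a : Fin m → ℤ),
      (∑ j, (a j).toNat) = N →
      (∀ k : ℕ, 0 ≤ ∑ j ∈ Finset.univ.filter (fun j : Fin m => (j : ℕ) < k), a j) →
      (∑ j, a j) = 0 →
      (0 < ∑ j, c j * (a j : ℚ)) →
      ∃ i j : Fin m, (i : ℕ) < (j : ℕ) ∧ 0 < a i ∧ a j < 0 ∧ c j < c i := by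
  intro N
  induction N using Nat.strong_induction_on with
  | _ N IH =>
    intro a hN hpre htot hpos
    -- the set of nonzero indices is nonempty
    have hSne : (Finset.univ.filter (fun j : Fin m => a j ≠ 0)).Nonempty := by
      by_contra h
      have hz : ∀ j : Fin m, a j = 0 := by
        intro j
        by_contra hj
        exact h ⟨j, Finset.mem_filter.mpr ⟨Finset.mem_univ _, hj⟩⟩
      have : (∑ j, c j * (a j : ℚ)) = 0 := by
        apply Finset.sum_eq_zero; intro j _; rw [hz j]; simp
      linarith
    set i0 := (Finset.univ.filter (fun j : Fin m => a j ≠ 0)).min' hSne with hi0def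
    have hi0mem := (Finset.univ.filter (fun j : Fin m => a j ≠ 0)).min'_mem hSne
    have hi0ne : a i0 ≠ 0 := (Finset.mem_filter.mp hi0mem).2
    have hi0min : ∀ j : Fin m, a j ≠ 0 → i0 ≤ j := by
      intro j hj
      exact Finset.min'_le _ j (Finset.mem_filter.mpr ⟨Finset.mem_univ _, hj⟩)
    -- a i0 > 0 from the prefix condition at k = i0 + 1
    have hi0pos : 0 < a i0 := by
      have hsum : (∑ j ∈ Finset.univ.filter (fun j : Fin m => (j : ℕ) < (i0 : ℕ) + 1), a j)
          = a i0 := by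
        apply Finset.sum_eq_single_of_mem
        · exact Finset.mem_filter.mpr ⟨Finset.mem_univ _, Nat.lt_succ_self _⟩
        · intro j hj hne
          by_contra hja
          have h1 := hi0min j hja
          have h2 := (Finset.mem_filter.mp hj).2
          have : (i0 : ℕ) ≤ (j : ℕ) := h1
          have : i0 = j := Fin.ext (by omega)
          exact hne this.symm
      have := hpre ((i0 : ℕ) + 1)
      rw [hsum] at this
      omega
    -- there is a negative index
    have hTne : (Finset.univ.filter (fun j : Fin m => a j < 0)).Nonempty := by
      by_contra h
      have hz : ∀ j : Fin m, 0 ≤ a j := by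
        intro j
        by_contra hj
        exact h ⟨j, Finset.mem_filter.mpr ⟨Finset.mem_univ _, by omega⟩⟩
      have := Finset.single_le_sum (f := a) (fun j _ => hz j) (Finset.mem_univ i0)
      omega
    set j0 := (Finset.univ.filter (fun j : Fin m => a j < 0)).min' hTne with hj0def
    have hj0mem := (Finset.univ.filter (fun j : Fin m => a j < 0)).min'_mem hTne
    have hj0neg : a j0 < 0 := (Finset.mem_filter.mp hj0mem).2
    have hj0min : ∀ j : Fin m, a j < 0 → j0 ≤ j := by
      intro j hj
      exact Finset.min'_le _ j (Finset.mem_filter.mpr ⟨Finset.mem_univ _, hj⟩)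
    have hij0 : (i0 : ℕ) < (j0 : ℕ) := by
      have h1 : i0 ≤ j0 := hi0min j0 (by omega)
      have h2 : i0 ≠ j0 := by intro h; rw [h] at hi0pos; omega
      have : (i0 : ℕ) ≤ (j0 : ℕ) := h1
      have : (i0 : ℕ) ≠ (j0 : ℕ) := fun h => h2 (Fin.ext h)
      omega
    have hne0 : i0 ≠ j0 := fun h => by rw [h] at hi0pos; omega
    by_cases hc : c j0 < c i0
    · exact ⟨i0, j0, hij0, hi0pos, hj0neg, hc⟩
    push_neg at hc
    -- cancel mass t between i0 and j0
    set t := min (a i0) (-a j0) with htdef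
    have ht : 0 < t := by omega
    have hti : t ≤ a i0 := min_le_left _ _
    have htj : t ≤ -a j0 := min_le_right _ _
    set a' := fun j => if j = i0 then a i0 - t else if j = j0 then a j0 + t else a j
      with ha'def
    have ha'eq : ∀ j, a' j = a j + ((if j = i0 then -t else 0) + (if j = j0 then t else 0)) := by
      intro j
      simp only [ha'def]
      by_cases h1 : j = i0
      · subst h1; simp [hne0]; ring
      · by_cases h2 : j = j0 <;> simp [h1, h2, hne0.symm]
    have hsplit : ∀ F : Finset (Fin m), (∑ j ∈ F, a' j)
        = (∑ j ∈ F, a j) + (if i0 ∈ F then -t else 0) + (if j0 ∈ F then t else 0) := by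
      intro F
      calc (∑ j ∈ F, a' j)
          = ∑ j ∈ F, (a j + ((if j = i0 then -t else 0) + (if j = j0 then t else 0))) := by
            apply Finset.sum_congr rfl; intro j _; exact ha'eq j
        _ = (∑ j ∈ F, a j) + (∑ j ∈ F, if j = i0 then -t else 0)
              + (∑ j ∈ F, if j = j0 then t else 0) := by
            rw [Finset.sum_add_distrib, Finset.sum_add_distrib]; ring
        _ = (∑ j ∈ F, a j) + (if i0 ∈ F then -t else 0) + (if j0 ∈ F then t else 0) := by
            rw [Finset.sum_ite_eq' F i0 (fun _ => -t), Finset.sum_ite_eq' F j0 (fun _ => t)]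
    -- prefix sums of a' are nonnegative
    have hpre' : ∀ k : ℕ,
        0 ≤ ∑ j ∈ Finset.univ.filter (fun j : Fin m => (j : ℕ) < k), a' j := by
      intro k
      rw [hsplit]
      have hmemi : i0 ∈ Finset.univ.filter (fun j : Fin m => (j : ℕ) < k) ↔ (i0 : ℕ) < k := by
        simp
      have hmemj : j0 ∈ Finset.univ.filter (fun j : Fin m => (j : ℕ) < k) ↔ (j0 : ℕ) < k := by
        simp
      by_cases hjk : (j0 : ℕ) < k
      · have hik : (i0 : ℕ) < k := by omega
        rw [if_pos (hmemi.mpr hik), if_pos (hmemj.mpr hjk)]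
        have := hpre k
        omega
      · rw [if_neg (fun h => hjk (hmemj.mp h))]
        by_cases hik : (i0 : ℕ) < k
        · rw [if_pos (hmemi.mpr hik)]
          -- all terms in the prefix are nonnegative, and a i0 ≥ t is among them
          have hall : ∀ j ∈ Finset.univ.filter (fun j : Fin m => (j : ℕ) < k), 0 ≤ a j := by
            intro j hj
            by_contra hja
            have := hj0min j (by omega)
            have h2 := (Finset.mem_filter.mp hj).2
            have : (j0 : ℕ) ≤ (j : ℕ) := this
            omega
          have := Finset.single_le_sum hall (hmemi.mpr hik)
          omega
        · rw [if_neg (fun h => hik (hmemi.mp h))]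
          have := hpre k
          omega
    -- total sum of a' is zero
    have htot' : (∑ j, a' j) = 0 := by
      rw [hsplit, if_pos (Finset.mem_univ _), if_pos (Finset.mem_univ _), htot]
      ring
    -- weighted sum of a' is still positive
    have hpos' : 0 < ∑ j, c j * (a' j : ℚ) := by
      have : (∑ j, c j * (a' j : ℚ))
          = (∑ j, c j * (a j : ℚ)) + (t : ℚ) * (c j0 - c i0) := by
        calc (∑ j, c j * (a' j : ℚ))
            = ∑ j, (c j * (a j : ℚ)
                + ((if j = i0 then -(t : ℚ) * c i0 else 0)
                  + (if j = j0 then (t : ℚ) * c j0 else 0))) := by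
              apply Finset.sum_congr rfl
              intro j _
              rw [ha'eq j]
              by_cases h1 : j = i0
              · subst h1; simp [hne0]; push_cast; ring
              · by_cases h2 : j = j0
                · subst h2; simp [h1]; push_cast; ring
                · simp [h1, h2]
          _ = (∑ j, c j * (a j : ℚ)) + (∑ j, if j = i0 then -(t : ℚ) * c i0 else 0)
                + (∑ j, if j = j0 then (t : ℚ) * c j0 else 0) := by
              rw [Finset.sum_add_distrib, Finset.sum_add_distrib]; ring
          _ = (∑ j, c j * (a j : ℚ)) + (t : ℚ) * (c j0 - c i0) := by
              rw [Finset.sum_ite_eq' Finset.univ i0 (fun _ => -(t : ℚ) * c i0),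
                Finset.sum_ite_eq' Finset.univ j0 (fun _ => (t : ℚ) * c j0)]
              simp; ring
      rw [this]
      have htq : (0 : ℚ) ≤ (t : ℚ) := by exact_mod_cast le_of_lt ht
      nlinarith
    -- the total positive mass strictly decreases
    have hmass : (∑ j, (a' j).toNat) < N := by
      rw [← hN]
      apply Finset.sum_lt_sum
      · intro j _
        by_cases h1 : j = i0
        · subst h1; simp only [ha'def, if_pos rfl]; omega
        · by_cases h2 : j = j0
          · subst h2; simp only [ha'def, if_neg h1, if_pos rfl]; omega
          · simp only [ha'def, if_neg h1, if_neg h2]; omega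
      · refine ⟨i0, Finset.mem_univ _, ?_⟩
        simp only [ha'def, if_pos rfl]
        omega
    obtain ⟨i, j, hij, hai, haj, hcc⟩ := IH _ hmass a' rfl hpre' htot' hpos'
    refine ⟨i, j, hij, ?_, ?_, hcc⟩
    · by_cases h1 : i = i0
      · subst h1; exact hi0pos
      · by_cases h2 : i = j0
        · subst h2; simp only [ha'def, if_neg h1, if_pos rfl] at hai; omega
        · simp only [ha'def, if_neg h1, if_neg h2] at hai; exact hai
    · by_cases h1 : j = i0
      · subst h1; simp only [ha'def, if_pos rfl] at haj; omega
      · by_cases h2 : j = j0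
        · subst h2; exact hj0neg
        · simp only [ha'def, if_neg h1, if_neg h2] at haj; exact haj

theorem stmt12 (m : ℕ) (hm : 1 ≤ m) (s : Fin m → ℤ) (hs : ∀ j, s j ≠ 0)
    (w : Fin m → ℚ) (y : Fin m → ℕ)
    (h1 : ∀ k : ℕ, k ≤ m - 1 →
      0 ≤ ∑ j ∈ Finset.univ.filter (fun j : Fin m => (j : ℕ) < k), s j * (y j : ℤ))
    (h2 : ∑ j : Fin m, s j * (y j : ℤ) = 0)
    (h3 : 0 < ∑ j : Fin m, w j * (y j : ℚ)) :
    ∃ i j : Fin m, (i : ℕ) < (j : ℕ) ∧ 0 < s i ∧ s j < 0 ∧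
      0 < -(s j : ℚ) * w i + (s i : ℚ) * w j := by
  have hpre : ∀ k : ℕ,
      0 ≤ ∑ j ∈ Finset.univ.filter (fun j : Fin m => (j : ℕ) < k), s j * (y j : ℤ) := by
    intro k
    by_cases hk : k ≤ m - 1
    · exact h1 k hk
    · have hfull : Finset.univ.filter (fun j : Fin m => (j : ℕ) < k) = Finset.univ := by
        apply Finset.filter_true_of_mem
        intro j _
        have := j.isLt
        omega
      rw [hfull, h2]
  have hpos : 0 < ∑ j : Fin m, (w j / (s j : ℚ)) * ((s j * (y j : ℤ) : ℤ) : ℚ) := by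
    have heq : ∀ j : Fin m,
        (w j / (s j : ℚ)) * ((s j * (y j : ℤ) : ℤ) : ℚ) = w j * (y j : ℚ) := by
      intro j
      have hsj : (s j : ℚ) ≠ 0 := by exact_mod_cast hs j
      push_cast
      field_simp
    rw [Finset.sum_congr rfl (fun j _ => heq j)]
    exact h3
  obtain ⟨i, j, hij, hai, haj, hcc⟩ :=
    stmt12_aux m (fun j => w j / (s j : ℚ)) (∑ j, (s j * (y j : ℤ)).toNat)
      (fun j => s j * (y j : ℤ)) rfl hpre h2 hpos
  have hyi : (0 : ℤ) ≤ (y i : ℤ) := Int.ofNat_nonneg _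
  have hyj : (0 : ℤ) ≤ (y j : ℤ) := Int.ofNat_nonneg _
  have hsi : 0 < s i := by nlinarith
  have hsj : s j < 0 := by nlinarith
  refine ⟨i, j, hij, hsi, hsj, ?_⟩
  have hsiQ : (0 : ℚ) < (s i : ℚ) := by exact_mod_cast hsi
  have hsjQ : (s j : ℚ) < 0 := by exact_mod_cast hsj
  have h' : (-w j) / (-(s j : ℚ)) < w i / (s i : ℚ) := by
    rw [neg_div_neg_eq]; exact hcc
  rw [div_lt_div_iff₀ (by linarith) hsiQ] at h'
  linarith
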